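/- arXiv:2102.12778 — 5 statements merged into one kernel-verified Lean document; each statement's English description precedes it below -/
import Mathlib

section
/- Let u, v ∈ ℝ³ and set α = ‖u‖ with 0 < α < 2π. Then the series ∑_{n≥0} (Bₙ/n!) ad_u^n(v) converges (in ℝ³) to v − (1/2) u × v + α^{-2} (1 − (α/2)·cot(α/2)) · (u × (u × v)). (This is the closed-form expression for dexp_u^{-1}(v) on the Lie algebra so(3) under the hat identification with (ℝ³, ×).) -/
noncomputable section

/-- Cross product on ℝ³. -/
def cross (u v : Fin 3 → ℝ) : Fin 3 → ℝ :=
  ![u 1 * v 2 - u 2 * v 1, u 2 * v 0 - u 0 * v 2, u 0 * v 1 - u 1 * v 0]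

/-- Euclidean inner product on ℝ³. -/
def dot (u v : Fin 3 → ℝ) : ℝ := u 0 * v 0 + u 1 * v 1 + u 2 * v 2

/-- Euclidean norm on ℝ³. -/
def norm3 (u : Fin 3 → ℝ) : ℝ := Real.sqrt (dot u u)

open Complex Finset

private lemma coeff_zero_of_hasSum_zero {c : ℕ → ℂ} {r : ℝ} (hr : 0 < r)
    (hc : ∀ t : ℝ, 0 < t → t < r → Summable (fun n => ‖c n‖ * t ^ n))
    (hs : ∀ w : ℂ, w ≠ 0 → ‖w‖ < r → HasSum (fun n => c n * w ^ n) 0) : c 0 = 0 := by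
  have hMs : Summable (fun n => ‖c (n + 1)‖ * (r / 2) ^ n) := by
    have h1 := hc (r / 2) (by linarith) (by linarith)
    have h2 := ((summable_nat_add_iff 1).2 h1).mul_right ((r / 2)⁻¹)
    refine h2.congr fun n => ?_
    have : (r / 2) ≠ 0 := by positivity
    field_simp [pow_succ]
    ring
  set M : ℝ := ∑' n, ‖c (n + 1)‖ * (r / 2) ^ n with hM
  have hM0 : 0 ≤ M := tsum_nonneg fun n => by positivity
  have key : ∀ t : ℝ, 0 < t → t < r / 2 → ‖c 0‖ ≤ t * M := by
    intro t ht htr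
    have hw := hs (t : ℂ) (by exact_mod_cast ht.ne') (by
      rw [Complex.norm_real, Real.norm_eq_abs, abs_of_pos ht]; linarith)
    have hb : ∀ n : ℕ, ‖c (n + 1) * (t : ℂ) ^ (n + 1)‖ ≤ t * (‖c (n + 1)‖ * (r / 2) ^ n) := by
      intro n
      rw [norm_mul, norm_pow, Complex.norm_real, Real.norm_eq_abs, abs_of_pos ht]
      have h1 : t ^ n ≤ (r / 2) ^ n := pow_le_pow_left₀ ht.le (by linarith) n
      calc ‖c (n + 1)‖ * t ^ (n + 1) = t * (‖c (n + 1)‖ * t ^ n) := by ring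
        _ ≤ t * (‖c (n + 1)‖ * (r / 2) ^ n) := by
            apply mul_le_mul_of_nonneg_left _ ht.le
            exact mul_le_mul_of_nonneg_left h1 (norm_nonneg _)
    have hbs : Summable fun n => ‖c (n + 1) * (t : ℂ) ^ (n + 1)‖ :=
      Summable.of_nonneg_of_le (fun n => norm_nonneg _) hb (hMs.mul_left t)
    have hc0 : c 0 = -∑' n, c (n + 1) * (t : ℂ) ^ (n + 1) := by
      have h0 := hw.tsum_eq
      rw [hw.summable.tsum_eq_zero_add] at h0
      simp only [pow_zero, mul_one] at h0
      linear_combination h0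
    calc ‖c 0‖ = ‖∑' n, c (n + 1) * (t : ℂ) ^ (n + 1)‖ := by rw [hc0, norm_neg]
      _ ≤ ∑' n, ‖c (n + 1) * (t : ℂ) ^ (n + 1)‖ := norm_tsum_le_tsum_norm hbs
      _ ≤ ∑' n, t * (‖c (n + 1)‖ * (r / 2) ^ n) := Summable.tsum_le_tsum hb hbs (hMs.mul_left t)
      _ = t * M := by rw [tsum_mul_left]
  by_contra hne
  have hpos : 0 < ‖c 0‖ := norm_pos_iff.mpr hne
  set t : ℝ := min (r / 4) (‖c 0‖ / (2 * (M + 1))) with htdef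
  have ht : 0 < t := lt_min (by linarith) (by positivity)
  have h1 := key t ht (lt_of_le_of_lt (min_le_left _ _) (by linarith))
  have h2 : t * M ≤ (‖c 0‖ / (2 * (M + 1))) * M :=
    mul_le_mul_of_nonneg_right (min_le_right _ _) hM0
  have h3 : (‖c 0‖ / (2 * (M + 1))) * M < ‖c 0‖ := by
    rw [div_mul_eq_mul_div, div_lt_iff₀ (by positivity)]
    nlinarith
  linarith


private lemma coeff_eq_zero_of_hasSum_zero {c : ℕ → ℂ} {r : ℝ} (hr : 0 < r)
    (hc : ∀ t : ℝ, 0 < t → t < r → Summable (fun n => ‖c n‖ * t ^ n))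
    (hs : ∀ w : ℂ, w ≠ 0 → ‖w‖ < r → HasSum (fun n => c n * w ^ n) 0) : ∀ n, c n = 0 := by
  intro n
  induction n generalizing c with
  | zero => exact coeff_zero_of_hasSum_zero hr hc hs
  | succ m ih =>
    have h0 : c 0 = 0 := coeff_zero_of_hasSum_zero hr hc hs
    refine ih (c := fun k => c (k + 1)) ?_ ?_
    · intro t ht htr
      have h2 := ((summable_nat_add_iff 1).2 (hc t ht htr)).mul_right t⁻¹
      refine h2.congr fun k => ?_
      rw [pow_succ]
      field_simp
    · intro w hw hwr
      have h1 := hs w hw hwr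
      have h2 : HasSum (fun k => c (k + 1) * w ^ (k + 1)) 0 := by
        refine (hasSum_nat_add_iff (f := fun k => c k * w ^ k) 1).2 ?_
        simpa [h0] using h1
      have h3 := h2.mul_right w⁻¹
      rw [zero_mul] at h3
      have heq : ∀ k : ℕ, c (k + 1) * w ^ (k + 1) * w⁻¹ = c (k + 1) * w ^ k := by
        intro k
        rw [pow_succ, mul_assoc, mul_assoc, mul_inv_cancel₀ hw, mul_one]
      simpa only [heq] using h3


private lemma dslope_exp_hasSum (w : ℂ) :
    HasSum (fun n : ℕ => (((n + 1).factorial : ℂ))⁻¹ * w ^ n) (dslope Complex.exp 0 w) := by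
  rcases eq_or_ne w 0 with rfl | hw
  · have : dslope Complex.exp 0 0 = 1 := by
      rw [dslope_same]; simp [Complex.deriv_exp]
    rw [this]
    have := hasSum_single (f := fun n : ℕ => (((n + 1).factorial : ℂ))⁻¹ * (0:ℂ) ^ n) 0
      (fun b hb => by simp [zero_pow hb])
    simpa using this
  · have hexp : HasSum (fun n : ℕ => ((n.factorial : ℂ))⁻¹ * w ^ n) (Complex.exp w) := by
      have := NormedSpace.exp_series_hasSum_exp' (𝕂 := ℂ) w
      rw [← Complex.exp_eq_exp_ℂ] at this
      simpa [smul_eq_mul] using this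
    have h1 : HasSum (fun n : ℕ => (((n + 1).factorial : ℂ))⁻¹ * w ^ (n + 1))
        (Complex.exp w - 1) := by
      refine (hasSum_nat_add_iff (f := fun n : ℕ => ((n.factorial : ℂ))⁻¹ * w ^ n) 1).2 ?_
      simpa using hexp
    have h2 := h1.mul_right w⁻¹
    rw [dslope_of_ne _ hw, slope_def_field]
    have heq : ∀ n : ℕ, (((n + 1).factorial : ℂ))⁻¹ * w ^ (n + 1) * w⁻¹
        = (((n + 1).factorial : ℂ))⁻¹ * w ^ n := by
      intro n; rw [pow_succ, mul_assoc, mul_assoc, mul_inv_cancel₀ hw, mul_one]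
    simp only [heq] at h2
    convert h2 using 1
    · rfl
    simp [Complex.exp_zero]
    field_simp


private lemma bernoulli_rec (n : ℕ) :
    ∑ k ∈ Finset.range (n + 1),
        (bernoulli k / k.factorial) * (((n - k + 1).factorial : ℚ))⁻¹
      = if n = 0 then 1 else 0 := by
  have h2 := congrArg (PowerSeries.coeff (n + 1)) (bernoulliPowerSeries_mul_exp_sub_one ℚ)
  rw [PowerSeries.coeff_mul, Finset.Nat.sum_antidiagonal_eq_sum_range_succ_mk] at h2
  rw [Finset.sum_range_succ] at h2
  have hlast : (PowerSeries.coeff (n + 1 - (n + 1))) (PowerSeries.exp ℚ - 1) = 0 := by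
    simp [PowerSeries.coeff_exp, PowerSeries.coeff_one]
  rw [Nat.sub_self] at h2
  rw [show (PowerSeries.coeff 0) (PowerSeries.exp ℚ - 1) = 0 by
    simp [PowerSeries.coeff_exp, PowerSeries.coeff_one], mul_zero, add_zero] at h2
  rw [PowerSeries.coeff_X] at h2
  have h3 : ∀ k ∈ Finset.range (n + 1),
      (PowerSeries.coeff k) (bernoulliPowerSeries ℚ) *
        (PowerSeries.coeff (n + 1 - k)) (PowerSeries.exp ℚ - 1)
      = (bernoulli k / k.factorial) * (((n - k + 1).factorial : ℚ))⁻¹ := by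
    intro k hk
    have hk' : k ≤ n := Nat.lt_succ_iff.mp (Finset.mem_range.mp hk)
    have hne : n + 1 - k ≠ 0 := by omega
    rw [bernoulliPowerSeries, PowerSeries.coeff_mk, map_sub, PowerSeries.coeff_exp,
      PowerSeries.coeff_one, if_neg hne]
    have : n + 1 - k = n - k + 1 := by omega
    rw [this]
    simp [Algebra.algebraMap_self, one_div]
  rw [Finset.sum_congr rfl h3] at h2
  rw [h2]
  by_cases h : n = 0 <;> simp [h]


private lemma bernoulli_series_complex {z : ℂ} (hz0 : z ≠ 0) (hz : ‖z‖ < 2 * Real.pi) :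
    HasSum (fun n : ℕ => (((bernoulli n : ℚ) : ℂ) / n.factorial) * z ^ n)
      (z / (Complex.exp z - 1)) := by
  have hπ : (0:ℝ) < Real.pi := Real.pi_pos
  set g : ℂ → ℂ := dslope Complex.exp 0 with hg
  have hgdiff : Differentiable ℂ g := by
    have h := (Complex.differentiableOn_dslope (c := (0:ℂ)) (s := Set.univ)
        Filter.univ_mem).2 Complex.differentiable_exp.differentiableOn
    rw [← differentiableOn_univ]; exact h
  have hgne : ∀ w : ℂ, ‖w‖ < 2 * Real.pi → g w ≠ 0 := by
    intro w hw
    rcases eq_or_ne w 0 with rfl | hw0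
    · rw [hg, dslope_same]; simp [Complex.deriv_exp]
    · rw [hg, dslope_of_ne _ hw0, slope_def_field]
      have hne1 : Complex.exp w ≠ 1 := by
        intro h1
        rcases Complex.exp_eq_one_iff.1 h1 with ⟨k, hk⟩
        have hk0 : k = 0 := by
          by_contra hkne
          have h2 : (1:ℝ) ≤ |(k:ℝ)| := by
            exact_mod_cast Int.one_le_abs (by simpa using hkne)
          have h3 : ‖w‖ = |(k:ℝ)| * (2 * Real.pi) := by
            rw [hk]
            rw [norm_mul]
            congr 1
            · simp [Complex.norm_intCast]
            · rw [norm_mul, norm_mul]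
              simp [Complex.norm_real, Real.pi_nonneg, abs_of_nonneg]
          nlinarith
        rw [hk0] at hk; simp at hk; exact hw0 hk
      apply div_ne_zero
      · simpa [Complex.exp_zero] using sub_ne_zero.2 hne1
      · simpa using hw0
  obtain ⟨R, hzR, hR2, hR0⟩ : ∃ R : NNReal, ‖z‖ < (R:ℝ) ∧ (R:ℝ) < 2 * Real.pi ∧ 0 < R := by
    refine ⟨⟨(‖z‖ + 2 * Real.pi) / 2, by positivity⟩, ?_, ?_, ?_⟩
    · show ‖z‖ < (‖z‖ + 2 * Real.pi) / 2; linarith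
    · show (‖z‖ + 2 * Real.pi) / 2 < 2 * Real.pi; linarith [norm_nonneg z]
    · apply NNReal.coe_pos.1
      show (0:ℝ) < (‖z‖ + 2 * Real.pi) / 2
      positivity
  set f : ℂ → ℂ := fun w => (g w)⁻¹ with hf
  have hfd : DifferentiableOn ℂ f (Metric.closedBall 0 R) := by
    apply DifferentiableOn.inv hgdiff.differentiableOn
    intro x hx
    exact hgne x (lt_of_le_of_lt (mem_closedBall_zero_iff.1 hx) hR2)
  have hp := hfd.hasFPowerSeriesOnBall hR0
  set p := cauchyPowerSeries f 0 R with hpdef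
  set a : ℕ → ℂ := fun n => p.coeff n with ha
  have hsum : ∀ w : ℂ, ‖w‖ < (R:ℝ) → HasSum (fun n => a n * w ^ n) (f w) := by
    intro w hw
    have hmem : w ∈ Metric.eball (0:ℂ) R := by
      rw [Metric.mem_eball, edist_zero_right]
      exact_mod_cast hw
    have h := hp.hasSum hmem
    rw [zero_add] at h
    have heq : ∀ n : ℕ, (p n fun _ => w) = a n * w ^ n := by
      intro n
      rw [FormalMultilinearSeries.apply_eq_pow_smul_coeff, smul_eq_mul, mul_comm]
    simpa only [heq] using h
  have hnorm : ∀ t : ℝ, 0 < t → t < (R:ℝ) → Summable (fun n => ‖a n‖ * t ^ n) := by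
    intro t ht htR
    have hco : ((t.toNNReal : ℝ)) = t := Real.coe_toNNReal t ht.le
    have h1 : ((t.toNNReal : NNReal) : ENNReal) < p.radius := by
      refine lt_of_lt_of_le ?_ hp.r_le
      exact ENNReal.coe_lt_coe.2 (by rw [← NNReal.coe_lt_coe, hco]; exact htR)
    have h2 := p.summable_norm_mul_pow h1
    refine h2.congr fun n => ?_
    rw [FormalMultilinearSeries.norm_apply_eq_norm_coef, hco]
  set e : ℕ → ℂ := fun j => (((j + 1).factorial : ℂ))⁻¹ with he
  have hesum : ∀ w : ℂ, HasSum (fun n => e n * w ^ n) (g w) := fun w => dslope_exp_hasSum w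
  have henorm : ∀ w : ℂ, Summable (fun n => ‖e n * w ^ n‖) := by
    intro w
    refine Summable.of_nonneg_of_le (fun n => norm_nonneg _) (fun n => ?_)
      (Real.summable_pow_div_factorial ‖w‖)
    rw [norm_mul, norm_pow, he]
    simp only [norm_inv, Complex.norm_natCast]
    rw [div_eq_mul_inv, mul_comm]
    apply mul_le_mul_of_nonneg_left _ (pow_nonneg (norm_nonneg w) n)
    rw [inv_le_inv₀ (by positivity) (by positivity)]
    exact_mod_cast Nat.factorial_le (Nat.le_succ n)
  have hanorm : ∀ w : ℂ, 0 < ‖w‖ → ‖w‖ < (R:ℝ) → Summable (fun n => ‖a n * w ^ n‖) := by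
    intro w h0 hwR
    refine (hnorm ‖w‖ h0 hwR).congr fun n => ?_
    rw [norm_mul, norm_pow]
  set C : ℕ → ℂ := fun n => ∑ kl ∈ Finset.HasAntidiagonal.antidiagonal n, a kl.1 * e kl.2 with hC
  have hinner : ∀ (w : ℂ) (n : ℕ),
      (∑ kl ∈ Finset.HasAntidiagonal.antidiagonal n, (a kl.1 * w ^ kl.1) * (e kl.2 * w ^ kl.2))
        = C n * w ^ n := by
    intro w n
    rw [hC, Finset.sum_mul]
    refine Finset.sum_congr rfl fun kl hkl => ?_
    have hn : kl.1 + kl.2 = n := Finset.HasAntidiagonal.mem_antidiagonal.1 hkl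
    rw [← hn, pow_add]
    ring
  have hCsum : ∀ w : ℂ, w ≠ 0 → ‖w‖ < (R:ℝ) → HasSum (fun n => C n * w ^ n) 1 := by
    intro w hw0 hwR
    have hfn := hanorm w (norm_pos_iff.2 hw0) hwR
    have hgn := henorm w
    have hprod := tsum_mul_tsum_eq_tsum_sum_antidiagonal_of_summable_norm hfn hgn
    have hsm := (summable_norm_sum_mul_antidiagonal_of_summable_norm hfn hgn).of_norm
    have hval : (∑' n, a n * w ^ n) * (∑' n, e n * w ^ n) = 1 := by
      rw [(hsum w hwR).tsum_eq, (hesum w).tsum_eq]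
      exact inv_mul_cancel₀ (hgne w (hwR.trans hR2))
    have h1 : HasSum (fun n => ∑ kl ∈ Finset.HasAntidiagonal.antidiagonal n,
        (a kl.1 * w ^ kl.1) * (e kl.2 * w ^ kl.2)) 1 := by
      rw [← hval, hprod]
      exact hsm.hasSum
    simpa only [hinner w] using h1
  set D : ℕ → ℂ := fun n => C n - (if n = 0 then 1 else 0) with hD
  have hDnorm : ∀ t : ℝ, 0 < t → t < (R:ℝ) → Summable (fun n => ‖D n‖ * t ^ n) := by
    intro t ht htR
    have htn : ‖(t:ℂ)‖ = t := by
      rw [Complex.norm_real, Real.norm_eq_abs, _root_.abs_of_pos ht]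
    have hfn := hanorm (t:ℂ) (by rw [htn]; exact ht) (by rw [htn]; exact htR)
    have hgn := henorm (t:ℂ)
    have hCn : Summable (fun n => ‖C n‖ * t ^ n) := by
      have hsm := summable_norm_sum_mul_antidiagonal_of_summable_norm hfn hgn
      refine hsm.congr fun n => ?_
      rw [hinner (t:ℂ) n, norm_mul, norm_pow, htn]
    have hIn : Summable (fun n => (if n = 0 then (1:ℝ) else 0) * t ^ n) :=
      (hasSum_single (f := fun n : ℕ => (if n = 0 then (1:ℝ) else 0) * t ^ n) 0
        (fun b hb => by simp [hb])).summable
    refine Summable.of_nonneg_of_le (fun n => by positivity) (fun n => ?_) (hCn.add hIn)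
    have hb : ‖D n‖ ≤ ‖C n‖ + (if n = 0 then 1 else 0) := by
      rw [hD]
      refine (norm_sub_le _ _).trans ?_
      gcongr
      split <;> simp
    calc ‖D n‖ * t ^ n ≤ (‖C n‖ + (if n = 0 then 1 else 0)) * t ^ n :=
          mul_le_mul_of_nonneg_right hb (by positivity)
      _ = ‖C n‖ * t ^ n + (if n = 0 then (1:ℝ) else 0) * t ^ n := by ring
  have hDsum : ∀ w : ℂ, w ≠ 0 → ‖w‖ < (R:ℝ) → HasSum (fun n => D n * w ^ n) 0 := by
    intro w hw0 hwR
    have h1 := hCsum w hw0 hwR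
    have h2 : HasSum (fun n => (if n = 0 then (1:ℂ) else 0) * w ^ n) 1 := by
      simpa using hasSum_single (f := fun n : ℕ => (if n = 0 then (1:ℂ) else 0) * w ^ n) 0
        (fun b hb => by simp [hb])
    have h3 := h1.sub h2
    rw [sub_self] at h3
    simpa only [hD, sub_mul] using h3
  have hCeq : ∀ n, C n = (if n = 0 then (1:ℂ) else 0) := by
    intro n
    have h := coeff_eq_zero_of_hasSum_zero (r := (R:ℝ))
      (by exact_mod_cast hR0) hDnorm hDsum n
    simpa [hD, sub_eq_zero] using h
  set B : ℕ → ℂ := fun n => ((bernoulli n : ℚ) : ℂ) / n.factorial with hB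
  have hBrec : ∀ n : ℕ, ∑ k ∈ Finset.range (n + 1), B k * e (n - k)
      = if n = 0 then 1 else 0 := by
    intro n
    have h := bernoulli_rec n
    simp only [hB, he]
    rw [show (if n = 0 then (1:ℂ) else 0) = ((if n = 0 then (1:ℚ) else 0 : ℚ) : ℂ)
      from by split <;> simp, ← h]
    push_cast
    rfl
  have hCrange : ∀ n, C n = ∑ k ∈ Finset.range (n + 1), a k * e (n - k) := by
    intro n
    simp only [hC]
    rw [Finset.Nat.sum_antidiagonal_eq_sum_range_succ_mk]
  have haB : ∀ n, a n = B n := by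
    intro n
    induction n using Nat.strong_induction_on with
    | _ n ih =>
      have h1 : ∑ k ∈ Finset.range (n + 1), a k * e (n - k) = if n = 0 then 1 else 0 := by
        rw [← hCrange n]; exact hCeq n
      have h2 := hBrec n
      have h3 : ∑ k ∈ Finset.range (n + 1), (a k - B k) * e (n - k) = 0 := by
        simp only [sub_mul, Finset.sum_sub_distrib]
        rw [h1, h2, sub_self]
      rw [Finset.sum_range_succ] at h3
      rw [Finset.sum_eq_zero (fun k hk => by
        rw [ih k (Finset.mem_range.1 hk), sub_self, zero_mul]), zero_add, Nat.sub_self] at h3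
      have he0 : e 0 = 1 := by rw [he]; simp
      rw [he0, mul_one] at h3
      exact sub_eq_zero.1 h3
  have hfin := hsum z hzR
  simp only [haB] at hfin
  have hfz : f z = z / (Complex.exp z - 1) := by
    show (g z)⁻¹ = _
    rw [hg, dslope_of_ne _ hz0, slope_def_field, Complex.exp_zero, sub_zero, inv_div]
  rw [hfz] at hfin
  simpa only [hB] using hfin


private lemma complex_value (α : ℝ) (h0 : 0 < α) (h2 : α < 2 * Real.pi) :
    (α:ℂ) * I / (Complex.exp ((α:ℂ) * I) - 1)
      = ((α / 2 * (Real.cos (α/2) / Real.sin (α/2)) : ℝ) : ℂ) - ((α/2 : ℝ) : ℂ) * I := by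
  have hπ : (0:ℝ) < Real.pi := Real.pi_pos
  have hs : Real.sin (α/2) ≠ 0 :=
    ne_of_gt (Real.sin_pos_of_pos_of_lt_pi (by linarith) (by linarith))
  have hden : Complex.exp ((α:ℂ) * I) - 1 ≠ 0 := by
    rw [sub_ne_zero]
    intro h1
    rcases Complex.exp_eq_one_iff.1 h1 with ⟨k, hk⟩
    have hk' : (α:ℂ) * I = ((k:ℝ) * (2*Real.pi) : ℝ) * I := by
      rw [hk]; push_cast; ring
    have hα : α = (k:ℝ) * (2*Real.pi) :=
      by exact_mod_cast mul_right_cancel₀ Complex.I_ne_zero hk'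
    rcases le_or_gt k 0 with hk0 | hk0
    · have : (k:ℝ) ≤ 0 := by exact_mod_cast hk0
      nlinarith
    · have : (1:ℝ) ≤ (k:ℝ) := by exact_mod_cast hk0
      nlinarith
  have hsC : Complex.sin ((α:ℂ)/2) ≠ 0 := by
    rw [show ((α:ℂ)/2) = ((α/2 : ℝ) : ℂ) by push_cast; ring, ← Complex.ofReal_sin]
    exact_mod_cast hs
  have hcos : Complex.cos (α:ℂ) = 2 * Complex.cos ((α:ℂ)/2)^2 - 1 := by
    have := Complex.cos_two_mul ((α:ℂ)/2); rwa [show 2*((α:ℂ)/2) = (α:ℂ) by ring] at this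
  have hsin : Complex.sin (α:ℂ) = 2 * Complex.sin ((α:ℂ)/2) * Complex.cos ((α:ℂ)/2) := by
    have := Complex.sin_two_mul ((α:ℂ)/2); rwa [show 2*((α:ℂ)/2) = (α:ℂ) by ring] at this
  have hsc : Complex.sin ((α:ℂ)/2)^2 + Complex.cos ((α:ℂ)/2)^2 = 1 :=
    Complex.sin_sq_add_cos_sq _
  rw [div_eq_iff hden, Complex.exp_mul_I]
  push_cast
  rw [hcos, hsin]
  field_simp
  linear_combination (2 * (α:ℂ) * Complex.cos ((α:ℂ)/2) * Complex.sin ((α:ℂ)/2)^2) * Complex.I_sq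
    + (-2 * (α:ℂ) * Complex.cos ((α:ℂ)/2)) * hsc


private lemma bernoulli_cot_hasSum (α : ℝ) (h0 : 0 < α) (h2 : α < 2 * Real.pi) :
    HasSum (fun j : ℕ =>
        ((bernoulli (2*j+2) : ℚ) : ℝ) / (2*j+2).factorial * ((-1:ℝ)^j * α^(2*j)))
      ((α^2)⁻¹ * (1 - α/2 * (Real.cos (α/2) / Real.sin (α/2)))) := by
  have hz0 : (α:ℂ) * I ≠ 0 := by
    simp [Complex.ext_iff]
    exact ne_of_gt h0
  have hzn : ‖(α:ℂ) * I‖ < 2 * Real.pi := by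
    rw [norm_mul, Complex.norm_I, mul_one, Complex.norm_real, Real.norm_eq_abs,
      abs_of_pos h0]
    exact h2
  have hz := bernoulli_series_complex hz0 hzn
  rw [complex_value α h0 h2] at hz
  have hre := Complex.hasSum_re hz
  set K : ℝ := α/2 * (Real.cos (α/2) / Real.sin (α/2)) with hK
  have hreK : ((K : ℂ) - ((α/2 : ℝ) : ℂ) * I).re = K := by simp
  rw [hreK] at hre
  set T : ℕ → ℝ := fun n => ((((bernoulli n : ℚ) : ℂ) / n.factorial) * ((α:ℂ) * I) ^ n).re
    with hT
  have hTval : ∀ n : ℕ, T n = ((bernoulli n : ℚ) : ℝ) / n.factorial * α^n * (I^n).re := by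
    intro n
    simp only [hT]
    rw [mul_pow]
    have : (((bernoulli n : ℚ) : ℂ) / n.factorial) * ((α:ℂ)^n * I^n)
        = ((((bernoulli n : ℚ) : ℝ) / n.factorial * α^n : ℝ) : ℂ) * I^n := by
      push_cast; ring
    rw [this, Complex.re_ofReal_mul]
  have hT0 : T 0 = 1 := by simp [hTval]
  have hT1 : T 1 = 0 := by simp [hTval]
  have him : ∀ m : ℕ, ((-1:ℂ)^m).im = 0 ∧ ((-1:ℂ)^m).re = (-1:ℝ)^m := by
    intro m
    rcases Nat.even_or_odd m with h | h
    · rw [h.neg_one_pow, h.neg_one_pow]; simp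
    · rw [h.neg_one_pow, h.neg_one_pow]; simp
  have hTodd : ∀ j : ℕ, T (2*j+1+2) = 0 := by
    intro j
    rw [hTval]
    have hI : (I : ℂ)^(2*j+1+2) = ((-1:ℂ)^(j+1)) * I := by
      rw [show 2*j+1+2 = 2*(j+1)+1 by ring, pow_succ, pow_mul, Complex.I_sq]
    rw [hI, Complex.mul_I_re, (him (j+1)).1]
    simp
  have hTeven : ∀ j : ℕ, T (2*j+2) =
      -(α^2) * (((bernoulli (2*j+2) : ℚ) : ℝ) / (2*j+2).factorial * ((-1:ℝ)^j * α^(2*j))) := by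
    intro j
    rw [hTval]
    have hI : (I : ℂ)^(2*j+2) = ((-1:ℂ)^(j+1)) := by
      rw [show 2*j+2 = 2*(j+1) by ring, pow_mul, Complex.I_sq]
    rw [hI, (him (j+1)).2, pow_succ]
    ring
  have hshift : HasSum (fun n => T (n + 2)) (K - 1) := by
    refine (hasSum_nat_add_iff (f := T) 2).2 ?_
    have : K - 1 + ∑ i ∈ Finset.range 2, T i = K := by
      rw [Finset.sum_range_succ, Finset.sum_range_one, hT0, hT1]; ring
    rw [this]
    exact hre
  have heven : HasSum (fun j => T (2*j + 2)) (K - 1) := by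
    have hinj : Function.Injective (fun j : ℕ => 2*j) := fun a b h => by simp at h; omega
    have hvan : ∀ n, n ∉ Set.range (fun j : ℕ => 2*j) → T (n + 2) = 0 := by
      intro n hn
      rcases Nat.even_or_odd n with he | ho
      · obtain ⟨j, hj⟩ := he
        exact absurd (Set.mem_range.2 ⟨j, show 2*j = n by omega⟩) hn
      · obtain ⟨j, hj⟩ := ho
        rw [show n + 2 = 2*j+1+2 by omega]
        exact hTodd j
    exact (Function.Injective.hasSum_iff hinj hvan).2 hshift
  have hA2 : (α:ℝ)^2 ≠ 0 := by positivity
  have hfinal := heven.mul_left (-(α^2))⁻¹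
  have hval : (-(α^2))⁻¹ * (K - 1) = (α^2)⁻¹ * (1 - K) := by
    field_simp
    ring
  rw [hval] at hfinal
  have hfeq : (fun i => (-(α^2))⁻¹ * T (2*i+2))
      = fun j => ((bernoulli (2*j+2) : ℚ) : ℝ) / (2*j+2).factorial * ((-1:ℝ)^j * α^(2*j)) := by
    funext j
    rw [hTeven j]
    field_simp
  rwa [hfeq] at hfinal


private lemma cross_smul (u x : Fin 3 → ℝ) (a : ℝ) : cross u (a • x) = a • cross u x := by
  funext i
  fin_cases i <;> simp [cross] <;> ring

private lemma cross_triple (u x : Fin 3 → ℝ) :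
    cross u (cross u (cross u x)) = (-(dot u u)) • cross u x := by
  funext i
  fin_cases i <;> simp [cross, dot] <;> ring

private lemma iter_odd (u v : Fin 3 → ℝ) (k : ℕ) :
    (cross u)^[2*k+1] v = ((-(dot u u))^k) • cross u v := by
  induction k with
  | zero => simp
  | succ k ih =>
    rw [show 2*(k+1)+1 = (2*k+1) + 1 + 1 by ring, Function.iterate_succ_apply',
      Function.iterate_succ_apply', ih, cross_smul, cross_smul, cross_triple,
      smul_smul, ← pow_succ]

private lemma iter_even (u v : Fin 3 → ℝ) (k : ℕ) :
    (cross u)^[2*k+2] v = ((-(dot u u))^k) • cross u (cross u v) := by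
  rw [show 2*k+2 = (2*k+1)+1 by ring, Function.iterate_succ_apply', iter_odd, cross_smul]


/-- Closed-form expression for `dexp⁻¹` on 𝔰𝔬(3) ≅ (ℝ³, ×):
for `u, v ∈ ℝ³` with `α = ‖u‖`, `0 < α < 2π`, the series `∑ (Bₙ/n!) adᵤⁿ(v)`
converges to `v - ½ u × v + α⁻²(1 - (α/2)cot(α/2)) u × (u × v)`. -/
theorem dexpinv_so3 (u v : Fin 3 → ℝ)
    (hpos : 0 < norm3 u) (hlt : norm3 u < 2 * Real.pi) :
    HasSum (fun n : ℕ => (((bernoulli n : ℚ) : ℝ) / n.factorial) • ((cross u)^[n] v))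
      (v - (1 / 2 : ℝ) • cross u v +
        (((norm3 u) ^ 2)⁻¹ *
            (1 - (norm3 u / 2) * (Real.cos (norm3 u / 2) / Real.sin (norm3 u / 2)))) •
          cross u (cross u v)) := by
  set α := norm3 u with hα
  have hdd : dot u u = u 0 ^ 2 + u 1 ^ 2 + u 2 ^ 2 := by simp [dot]; ring
  have hA : dot u u = α ^ 2 := by
    rw [hα, norm3, Real.sq_sqrt (by rw [hdd]; positivity)]
  set t : ℕ → (Fin 3 → ℝ) :=
    fun n : ℕ => (((bernoulli n : ℚ) : ℝ) / n.factorial) • ((cross u)^[n] v) with ht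
  set c2 : ℝ := ((α ^ 2)⁻¹ * (1 - α / 2 * (Real.cos (α / 2) / Real.sin (α / 2)))) with hc2
  have hc := bernoulli_cot_hasSum α hpos hlt
  have h2 := hc.smul_const (cross u (cross u v))
  have hteven : ∀ j : ℕ, t (2*j+2) =
      (((bernoulli (2*j+2) : ℚ) : ℝ) / (2*j+2).factorial * ((-1:ℝ)^j * α^(2*j))) •
        cross u (cross u v) := by
    intro j
    simp only [ht]
    rw [iter_even, smul_smul]
    congr 1
    rw [hA, neg_pow, ← pow_mul]
  have htodd : ∀ j : ℕ, t (2*j+1+2) = 0 := by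
    intro j
    simp only [ht]
    have hb : bernoulli (2*j+1+2) = 0 := by
      rw [bernoulli_eq_bernoulli'_of_ne_one (by omega)]
      exact bernoulli'_eq_zero_of_odd ⟨j+1, by ring⟩ (by omega)
    rw [hb]
    simp
  have h3 : HasSum (fun n => t (n+2)) (c2 • cross u (cross u v)) := by
    have hinj : Function.Injective (fun j : ℕ => 2*j) := fun a b h => by simp at h; omega
    have hvan : ∀ n, n ∉ Set.range (fun j : ℕ => 2*j) → t (n+2) = 0 := by
      intro n hn
      rcases Nat.even_or_odd n with he | ho
      · obtain ⟨j, hj⟩ := he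
        exact absurd (Set.mem_range.2 ⟨j, show 2*j = n by omega⟩) hn
      · obtain ⟨j, hj⟩ := ho
        rw [show n+2 = 2*j+1+2 by omega]
        exact htodd j
    refine (Function.Injective.hasSum_iff hinj hvan).1 ?_
    have hcomp : ((fun n => t (n + 2)) ∘ fun j : ℕ => 2 * j) = fun j : ℕ => t (2*j + 2) := rfl
    rw [hcomp]
    simp only [hteven]
    exact h2
  have h4 := (hasSum_nat_add_iff (f := t) 2).1 h3
  have ht0 : t 0 = v := by simp [ht]
  have ht1 : t 1 = (-(1/2) : ℝ) • cross u v := by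
    simp only [ht, Function.iterate_one]
    norm_num [bernoulli_one]
  rw [Finset.sum_range_succ, Finset.sum_range_one, ht0, ht1] at h4
  have hfin : c2 • cross u (cross u v) + (v + (-(1/2) : ℝ) • cross u v)
      = v - (1 / 2 : ℝ) • cross u v + c2 • cross u (cross u v) := by
    rw [neg_smul]
    abel
  rw [hfin] at h4
  exact h4
end
end

section
/- Let r > 0 and let (q₁, ω₁), (q₂, ω₂) ∈ ℝ³ × ℝ³ satisfy ‖q₁‖ = ‖q₂‖ = r, q₁·ω₁ = 0 and q₂·ω₂ = 0. Then there exist a real 3×3 matrix A with AᵀA = I and det A = 1, and a vector a ∈ ℝ³, such that A q₁ = q₂ and A ω₁ + a × (A q₁) = ω₂. (Hence the action ψ((A,a),(q,ω)) = (Aq, Aω + a × (Aq)) of SE(3) on TS²_r = {(q,ω) : ‖q‖ = r, q·ω = 0} is transitive; in particular for r = 1 it gives a transitive Lie group action on the tangent bundle TS² of the unit sphere.) -/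
noncomputable section

open Matrix

set_option maxHeartbeats 1000000

lemma rot_to_pole (r : ℝ) (hr : 0 < r) (q : Fin 3 → ℝ)
    (hq : q 0 * q 0 + q 1 * q 1 + q 2 * q 2 = r ^ 2) :
    ∃ A : Matrix (Fin 3) (Fin 3) ℝ, Aᵀ * A = 1 ∧ A.det = 1 ∧ A.mulVec q = ![r, 0, 0] := by
  by_cases h : q 0 = r
  · refine ⟨1, by simp, by simp, ?_⟩
    have h1 : q 1 = 0 := by nlinarith [sq_nonneg (q 1), sq_nonneg (q 2)]
    have h2 : q 2 = 0 := by nlinarith [sq_nonneg (q 1), sq_nonneg (q 2)]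
    funext i
    fin_cases i <;> simp [Matrix.one_mulVec, h, h1, h2]
  · obtain ⟨n0, n1, n2, hn0, hn1, hn2⟩ :
        ∃ n0 n1 n2 : ℝ, n0 = q 0 - r ∧ n1 = q 1 ∧ n2 = q 2 := ⟨_, _, _, rfl, rfl, rfl⟩
    obtain ⟨s, hs⟩ : ∃ s : ℝ, s = n0 ^ 2 + n1 ^ 2 + n2 ^ 2 := ⟨_, rfl⟩
    have hn0ne : n0 ≠ 0 := by rw [hn0]; exact sub_ne_zero.mpr h
    have hspos : 0 < s := by rw [hs]; positivity
    have hsne : s ≠ 0 := ne_of_gt hspos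
    obtain ⟨B, hB⟩ : ∃ B : Matrix (Fin 3) (Fin 3) ℝ,
        B = !![s - 2*n0*n0, -(2*n0*n1), -(2*n0*n2);
               -(2*n1*n0), s - 2*n1*n1, -(2*n1*n2);
               2*n2*n0, 2*n2*n1, 2*n2*n2 - s] := ⟨_, rfl⟩
    have hBt : Bᵀ = !![s - 2*n0*n0, -(2*n1*n0), 2*n2*n0;
               -(2*n0*n1), s - 2*n1*n1, 2*n2*n1;
               -(2*n0*n2), -(2*n1*n2), 2*n2*n2 - s] := by
      rw [hB]; ext i j; fin_cases i <;> fin_cases j <;> rfl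
    have hBtB : Bᵀ * B = (s^2) • 1 := by
      rw [hBt, hB, Matrix.mul_fin_three]
      ext i j
      fin_cases i <;> fin_cases j <;>
        simp [Matrix.one_apply, hs] <;> ring
    have hBdet : B.det = s ^ 3 := by
      rw [hB, Matrix.det_fin_three]
      simp [hs]
      ring
    have hBq : B.mulVec q = s • ![r, 0, 0] := by
      funext i
      rw [hB]
      fin_cases i <;>
        simp [Matrix.mulVec, dotProduct, Fin.sum_univ_three, hn0, hn1, hn2, hs]
      · linear_combination (r - q 0) * hq
      · linear_combination (-(q 1)) * hq
      · linear_combination (q 2) * hq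
    refine ⟨s⁻¹ • B, ?_, ?_, ?_⟩
    · rw [Matrix.transpose_smul, Matrix.smul_mul, Matrix.mul_smul, hBtB, smul_smul, smul_smul]
      rw [show s⁻¹ * s⁻¹ * s^2 = 1 by field_simp, one_smul]
    · rw [Matrix.det_smul, hBdet]
      simp
      field_simp
    · rw [Matrix.smul_mulVec, hBq, smul_smul, inv_mul_cancel₀ hsne, one_smul]

/-- Transitivity of the `SE(3)` action `ψ((A,a),(q,ω)) = (Aq, Aω + a × (Aq))`
on `TS²_r = {(q,ω) : ‖q‖ = r, q·ω = 0}`. -/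
theorem se3_action_transitive_on_TS2 (r : ℝ) (hr : 0 < r)
    (q₁ ω₁ q₂ ω₂ : Fin 3 → ℝ)
    (hq₁ : norm3 q₁ = r) (hq₂ : norm3 q₂ = r)
    (hω₁ : dot q₁ ω₁ = 0) (hω₂ : dot q₂ ω₂ = 0) :
    ∃ (A : Matrix (Fin 3) (Fin 3) ℝ) (a : Fin 3 → ℝ),
      Aᵀ * A = 1 ∧ A.det = 1 ∧
      A.mulVec q₁ = q₂ ∧ A.mulVec ω₁ + cross a (A.mulVec q₁) = ω₂ := by
  have sq_of_norm : ∀ q : Fin 3 → ℝ, norm3 q = r →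
      q 0 * q 0 + q 1 * q 1 + q 2 * q 2 = r ^ 2 := by
    intro q hq
    have hnn : 0 ≤ dot q q := by simp [dot]; nlinarith [sq_nonneg (q 0), sq_nonneg (q 1), sq_nonneg (q 2)]
    have : dot q q = r ^ 2 := by
      rw [← hq, norm3]
      exact (Real.sq_sqrt hnn).symm
    simpa [dot] using this
  have hQ1 := sq_of_norm q₁ hq₁
  have hQ2 := sq_of_norm q₂ hq₂
  obtain ⟨A₁, hA₁o, hA₁d, hA₁q⟩ := rot_to_pole r hr q₁ hQ1
  obtain ⟨A₂, hA₂o, hA₂d, hA₂q⟩ := rot_to_pole r hr q₂ hQ2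
  set A : Matrix (Fin 3) (Fin 3) ℝ := A₂ᵀ * A₁ with hA
  have hAo : Aᵀ * A = 1 := by
    rw [hA, Matrix.transpose_mul, Matrix.transpose_transpose, Matrix.mul_assoc,
      ← Matrix.mul_assoc A₂, mul_eq_one_comm.mp hA₂o, Matrix.one_mul, hA₁o]
  have hAd : A.det = 1 := by
    rw [hA, Matrix.det_mul, Matrix.det_transpose, hA₂d, hA₁d, one_mul]
  have hAq : A.mulVec q₁ = q₂ := by
    rw [hA, ← Matrix.mulVec_mulVec, hA₁q, ← hA₂q, Matrix.mulVec_mulVec, hA₂o,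
      Matrix.one_mulVec]
  obtain ⟨w, hw⟩ : ∃ w : Fin 3 → ℝ, w = A.mulVec ω₁ := ⟨_, rfl⟩
  -- orthogonality equations from Aᵀ * A = 1
  have hent : ∀ i j : Fin 3,
      A 0 i * A 0 j + A 1 i * A 1 j + A 2 i * A 2 j = if i = j then 1 else 0 := by
    intro i j
    have := Matrix.ext_iff.mpr hAo i j
    simpa [Matrix.mul_apply, Fin.sum_univ_three, Matrix.one_apply] using this
  have hkey : dot q₂ w = 0 := by
    have hpres : dot (A.mulVec q₁) (A.mulVec ω₁) = dot q₁ ω₁ := by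
      have h00 := hent 0 0; have h01 := hent 0 1; have h02 := hent 0 2
      have h10 := hent 1 0; have h11 := hent 1 1; have h12 := hent 1 2
      have h20 := hent 2 0; have h21 := hent 2 1; have h22 := hent 2 2
      simp only [if_pos, if_neg, Fin.ext_iff] at h00 h01 h02 h10 h11 h12 h20 h21 h22
      norm_num at h00 h01 h02 h10 h11 h12 h20 h21 h22
      simp [dot, Matrix.mulVec, dotProduct, Fin.sum_univ_three]
      linear_combination q₁ 0 * ω₁ 0 * h00 + q₁ 0 * ω₁ 1 * h01 + q₁ 0 * ω₁ 2 * h02 +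
        q₁ 1 * ω₁ 0 * h10 + q₁ 1 * ω₁ 1 * h11 + q₁ 1 * ω₁ 2 * h12 +
        q₁ 2 * ω₁ 0 * h20 + q₁ 2 * ω₁ 1 * h21 + q₁ 2 * ω₁ 2 * h22
    rw [hw, ← hAq, hpres, hω₁]
  refine ⟨A, (r^2)⁻¹ • cross q₂ (ω₂ - w), hAo, hAd, hAq, ?_⟩
  rw [hAq, ← hw]
  have hr2 : (r:ℝ)^2 ≠ 0 := by positivity
  simp only [dot] at hkey hω₂
  funext i
  fin_cases i <;>
    simp [cross, Pi.add_apply, Pi.sub_apply, Pi.smul_apply, smul_eq_mul] <;>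
    field_simp
  · linear_combination (ω₂ 0 - w 0) * hQ2 - q₂ 0 * hω₂ + q₂ 0 * hkey
  · linear_combination (ω₂ 1 - w 1) * hQ2 - q₂ 1 * hω₂ + q₂ 1 * hkey
  · linear_combination (ω₂ 2 - w 2) * hQ2 - q₂ 2 * hω₂ + q₂ 2 * hkey
end
end

section
/- Let N ≥ 1, let m : {1,…,N} → ℝ with m_k > 0 for all k, and let L : {1,…,N} → ℝ with L_i ≠ 0 for all i. Then the real N×N matrix M with entries M_{ij} = (∑_{k ≥ max(i,j)} m_k) · L_i L_j is symmetric positive definite. (This is the inertia matrix of the N-fold 3D pendulum, up to tensoring with I₃.) -/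
open Finset Matrix

theorem pendulum_quad_eq (N : ℕ) (m L x : Fin N → ℝ) :
    x ⬝ᵥ (Matrix.of fun i j : Fin N =>
        (∑ k ∈ univ.filter (fun k => max i j ≤ k), m k) * L i * L j).mulVec x
    = ∑ k, m k * (∑ i ∈ univ.filter (fun i => i ≤ k), L i * x i)^2 := by
  have swap : ∀ (f : Fin N → Fin N → Fin N → ℝ),
      (∑ i, ∑ j, ∑ k, f i j k) = ∑ k, ∑ i, ∑ j, f i j k := by
    intro f
    calc (∑ i, ∑ j, ∑ k, f i j k) = ∑ i, ∑ k, ∑ j, f i j k :=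
          Finset.sum_congr rfl fun i _ => Finset.sum_comm
    _ = ∑ k, ∑ i, ∑ j, f i j k := Finset.sum_comm
  simp only [dotProduct, mulVec, of_apply, Finset.sum_filter, Finset.mul_sum,
    Finset.sum_mul, sq, max_le_iff, ite_mul, zero_mul, mul_ite, mul_zero]
  rw [swap]
  refine Finset.sum_congr rfl fun k _ => Finset.sum_congr rfl fun i _ => ?_
  by_cases hi : i ≤ k
  · simp only [hi, true_and, if_true]
    exact Finset.sum_congr rfl fun j _ => by by_cases hj : j ≤ k <;> simp [hj] <;> ring
  · simp [hi]

/-- The inertia matrix of the `N`-fold 3D pendulum,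
`M_{ij} = (∑_{k ≥ max(i,j)} m_k) L_i L_j` with all `m_k > 0` and `L_i ≠ 0`,
is symmetric positive definite. -/
theorem pendulum_inertia_posdef (N : ℕ) (hN : 1 ≤ N) (m L : Fin N → ℝ)
    (hm : ∀ k, 0 < m k) (hL : ∀ i, L i ≠ 0) :
    (Matrix.of fun i j : Fin N =>
        (∑ k ∈ univ.filter (fun k => max i j ≤ k), m k) * L i * L j)ᵀ =
      (Matrix.of fun i j : Fin N =>
        (∑ k ∈ univ.filter (fun k => max i j ≤ k), m k) * L i * L j) ∧
    ∀ x : Fin N → ℝ, x ≠ 0 →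
      0 < x ⬝ᵥ (Matrix.of fun i j : Fin N =>
        (∑ k ∈ univ.filter (fun k => max i j ≤ k), m k) * L i * L j).mulVec x := by
  constructor
  · ext i j
    simp only [transpose_apply, of_apply, max_comm]
    ring
  · intro x hx
    rw [pendulum_quad_eq]
    have hsne : (univ.filter (fun i => x i ≠ 0)).Nonempty := by
      obtain ⟨i, hi⟩ := Function.ne_iff.mp hx
      exact ⟨i, by simpa using hi⟩
    set i₀ := (univ.filter (fun i => x i ≠ 0)).min' hsne with hi₀def
    have hi₀ : x i₀ ≠ 0 := by
      have := Finset.min'_mem _ hsne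
      simpa using this
    have hmin : ∀ j, j < i₀ → x j = 0 := by
      intro j hj
      by_contra h
      exact absurd (Finset.min'_le _ j (by simpa using h)) (not_le.mpr hj)
    have hS : (∑ i ∈ univ.filter (fun i => i ≤ i₀), L i * x i) = L i₀ * x i₀ := by
      rw [Finset.sum_eq_single i₀]
      · intro j hj hne
        have hjle : j ≤ i₀ := by simpa using hj
        rw [hmin j (lt_of_le_of_ne hjle hne), mul_zero]
      · intro h; exact absurd (by simp) h
    apply Finset.sum_pos'
    · intro k _
      exact mul_nonneg (hm k).le (sq_nonneg _)
    · refine ⟨i₀, Finset.mem_univ _, ?_⟩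
      rw [hS]
      exact mul_pos (hm i₀) (pow_pos (abs_pos.mpr (mul_ne_zero (hL i₀) hi₀)) 2 |>.trans_eq (sq_abs _))
end

section
/- Let N ≥ 1, let m : {1,…,N} → ℝ with m_k > 0, let L : {1,…,N} → ℝ with L_i ≠ 0, and let q, ω : {1,…,N} → ℝ³ satisfy ‖q_i‖ = 1 and q_i·ω_i = 0 for all i, with ω not identically zero. Write c_i = ∑_{k≥i} m_k. Then the quadratic form of R(q) is strictly positive: ∑_i c_i L_i² ‖ω_i‖² + ∑_{i≠j} c_{max(i,j)} L_i L_j · (q_i × ω_i)·(q_j × ω_j) > 0. (Hence R(q) defines a positive-definite bilinear form on T_{q₁}S² × ⋯ × T_{q_N}S²; the key identity is ω_iᵀ q̂_iᵀ q̂_j ω_j = (q_i × ω_i)·(q_j × ω_j) and the positive definiteness of the inertia matrix M_{ij} = c_{max(i,j)} L_i L_j.) -/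
noncomputable section

open Finset

lemma dot_eq_sum (u v : Fin 3 → ℝ) : dot u v = ∑ t : Fin 3, u t * v t := by
  simp [dot, Fin.sum_univ_three]

lemma dot_self_nonneg (u : Fin 3 → ℝ) : 0 ≤ dot u u := by
  rw [dot_eq_sum]
  exact Finset.sum_nonneg fun t _ => mul_self_nonneg _

lemma dot_self_pos {u : Fin 3 → ℝ} (h : u ≠ 0) : 0 < dot u u := by
  have ht : ∃ t, u t ≠ 0 := by
    by_contra hc; push_neg at hc; exact h (funext hc)
  obtain ⟨t, ht⟩ := ht
  rw [dot_eq_sum]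
  exact Finset.sum_pos' (fun s _ => mul_self_nonneg _)
    ⟨t, mem_univ t, mul_self_pos.mpr ht⟩

lemma lagrange (u v : Fin 3 → ℝ) :
    dot (cross u v) (cross u v) = dot u u * dot v v - dot u v ^ 2 := by
  simp only [cross, dot, Matrix.cons_val_zero, Matrix.cons_val_one, Matrix.head_cons,
    Matrix.cons_val_two, Matrix.tail_cons]
  ring

lemma dot_smul_smul (a b : ℝ) (u w : Fin 3 → ℝ) :
    dot (fun t => a * u t) (fun t => b * w t) = a * b * dot u w := by
  unfold dot; ring

lemma dot_sum_sum {ι : Type*} (s : Finset ι) (g h : ι → Fin 3 → ℝ) :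
    dot (fun t => ∑ i ∈ s, g i t) (fun t => ∑ j ∈ s, h j t)
      = ∑ i ∈ s, ∑ j ∈ s, dot (g i) (h j) := by
  simp only [dot_eq_sum, Finset.sum_mul_sum]
  rw [Finset.sum_comm]
  refine Finset.sum_congr rfl fun i _ => ?_
  rw [Finset.sum_comm]

/-- The quadratic form of the inertia-type operator `R(q)` of the `N`-fold
3D pendulum is strictly positive on nonzero elements of
`T_{q₁}S² × ⋯ × T_{q_N}S²`: with `c_i = ∑_{k ≥ i} m_k`,
`∑_i c_i L_i² ‖ω_i‖² + ∑_{i ≠ j} c_{max(i,j)} L_i L_j (q_i × ω_i)·(q_j × ω_j) > 0`. -/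
theorem pendulum_quadratic_form_pos (N : ℕ) (hN : 1 ≤ N) (m L : Fin N → ℝ)
    (hm : ∀ k, 0 < m k) (hL : ∀ i, L i ≠ 0)
    (q ω : Fin N → (Fin 3 → ℝ))
    (hq : ∀ i, norm3 (q i) = 1) (hqω : ∀ i, dot (q i) (ω i) = 0)
    (hω : ω ≠ 0) :
    0 < ∑ i : Fin N, (∑ k ∈ univ.filter (fun k => i ≤ k), m k) * L i ^ 2 * norm3 (ω i) ^ 2 +
        ∑ i : Fin N, ∑ j ∈ univ.erase i,
          (∑ k ∈ univ.filter (fun k => max i j ≤ k), m k) * L i * L j *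
            dot (cross (q i) (ω i)) (cross (q j) (ω j)) := by
  have hqq : ∀ i, dot (q i) (q i) = 1 := by
    intro i
    have h1 := hq i
    unfold norm3 at h1
    have h2 := Real.sq_sqrt (dot_self_nonneg (q i))
    rw [h1] at h2
    nlinarith
  have hcr : ∀ i, dot (cross (q i) (ω i)) (cross (q i) (ω i)) = dot (ω i) (ω i) := by
    intro i
    rw [lagrange, hqq, hqω]; ring
  have hnorm : ∀ i, norm3 (ω i) ^ 2 = dot (ω i) (ω i) := fun i =>
    Real.sq_sqrt (dot_self_nonneg (ω i))
  set d : Fin N → Fin N → ℝ := fun i j =>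
    dot (cross (q i) (ω i)) (cross (q j) (ω j)) with hd
  -- Step 1: fold the diagonal into the full double sum
  have step1 : (∑ i : Fin N, (∑ k ∈ univ.filter (fun k => i ≤ k), m k) * L i ^ 2 * norm3 (ω i) ^ 2 +
        ∑ i : Fin N, ∑ j ∈ univ.erase i,
          (∑ k ∈ univ.filter (fun k => max i j ≤ k), m k) * L i * L j * d i j)
      = ∑ i : Fin N, ∑ j : Fin N,
          (∑ k ∈ univ.filter (fun k => max i j ≤ k), m k) * L i * L j * d i j := by
    rw [← Finset.sum_add_distrib]
    refine Finset.sum_congr rfl fun i _ => ?_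
    rw [← Finset.add_sum_erase _ _ (mem_univ i)]
    congr 1
    simp only [max_self, hd]
    rw [hcr i, hnorm i]
    ring
  rw [step1]
  -- Step 2: rewrite as ∑ k, m k * ‖S k‖²
  set S : Fin N → Fin 3 → ℝ := fun k t =>
    ∑ i ∈ univ.filter (fun i => i ≤ k), L i * cross (q i) (ω i) t with hS
  have step2 : (∑ i : Fin N, ∑ j : Fin N,
          (∑ k ∈ univ.filter (fun k => max i j ≤ k), m k) * L i * L j * d i j)
      = ∑ k : Fin N, m k * dot (S k) (S k) := by
    have hk : ∀ k, m k * dot (S k) (S k)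
        = ∑ i : Fin N, ∑ j : Fin N,
            if i ≤ k then (if j ≤ k then m k * (L i * L j * d i j) else 0) else 0 := by
      intro k
      have h1 : dot (S k) (S k) = ∑ i ∈ univ.filter (fun i => i ≤ k),
          ∑ j ∈ univ.filter (fun j => j ≤ k),
            dot (fun t => L i * cross (q i) (ω i) t) (fun t => L j * cross (q j) (ω j) t) :=
        dot_sum_sum _ _ _
      rw [h1]
      simp only [dot_smul_smul]
      rw [Finset.mul_sum, Finset.sum_filter]
      refine Finset.sum_congr rfl fun i _ => ?_
      split
      · rw [Finset.mul_sum, Finset.sum_filter]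
      · simp
    calc (∑ i : Fin N, ∑ j : Fin N,
          (∑ k ∈ univ.filter (fun k => max i j ≤ k), m k) * L i * L j * d i j)
        = ∑ i : Fin N, ∑ j : Fin N, ∑ k : Fin N,
            if i ≤ k then (if j ≤ k then m k * (L i * L j * d i j) else 0) else 0 := by
          refine Finset.sum_congr rfl fun i _ => Finset.sum_congr rfl fun j _ => ?_
          rw [Finset.sum_filter, Finset.sum_mul, Finset.sum_mul, Finset.sum_mul]
          refine Finset.sum_congr rfl fun k _ => ?_
          by_cases h1 : i ≤ k <;> by_cases h2 : j ≤ k <;>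
            simp [h1, h2, max_le_iff] <;> ring
      _ = ∑ i : Fin N, ∑ k : Fin N, ∑ j : Fin N,
            if i ≤ k then (if j ≤ k then m k * (L i * L j * d i j) else 0) else 0 :=
          Finset.sum_congr rfl fun i _ => Finset.sum_comm
      _ = ∑ k : Fin N, ∑ i : Fin N, ∑ j : Fin N,
            if i ≤ k then (if j ≤ k then m k * (L i * L j * d i j) else 0) else 0 :=
          Finset.sum_comm
      _ = ∑ k : Fin N, m k * dot (S k) (S k) :=
          Finset.sum_congr rfl fun k _ => (hk k).symm
  rw [step2]
  -- Step 3: positivity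
  have hT : (univ.filter (fun i => ω i ≠ 0)).Nonempty := by
    by_contra hc
    rw [Finset.not_nonempty_iff_eq_empty, Finset.filter_eq_empty_iff] at hc
    apply hω
    funext i
    simpa using hc (mem_univ i)
  set i₀ := (univ.filter (fun i => ω i ≠ 0)).min' hT with hi₀
  have hω₀ : ω i₀ ≠ 0 := by
    have := Finset.min'_mem _ hT
    simpa using this
  have hmin : ∀ i, i < i₀ → ω i = 0 := by
    intro i hi
    by_contra hne
    have : i₀ ≤ i := Finset.min'_le _ _ (by simpa using hne)
    exact absurd hi (not_lt.mpr this)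
  have hSi₀ : S i₀ = fun t => L i₀ * cross (q i₀) (ω i₀) t := by
    funext t
    show (∑ i ∈ univ.filter (fun i => i ≤ i₀), L i * cross (q i) (ω i) t)
        = L i₀ * cross (q i₀) (ω i₀) t
    refine Finset.sum_eq_single i₀ (fun i hi hne => ?_) (fun h => ?_)
    · have hle : i ≤ i₀ := by simpa using hi
      have h0 : ω i = 0 := hmin i (lt_of_le_of_ne hle hne)
      rw [h0]
      fin_cases t <;> simp [cross]
    · exact absurd (by simp : i₀ ∈ univ.filter (fun i => i ≤ i₀)) h
  have hpos : 0 < m i₀ * dot (S i₀) (S i₀) := by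
    rw [hSi₀, dot_smul_smul, hcr]
    exact mul_pos (hm i₀) (mul_pos (mul_self_pos.mpr (hL i₀)) (dot_self_pos hω₀))
  exact Finset.sum_pos' (fun k _ => mul_nonneg (hm k).le (dot_self_nonneg _))
    ⟨i₀, mem_univ _, hpos⟩
end
end

section
/- Let N ≥ 1, let m : {1,…,N} → ℝ with m_k > 0, let L : {1,…,N} → ℝ with L_i ≠ 0, and let q : {1,…,N} → ℝ³ with ‖q_i‖ = 1 for all i. Write c_i = ∑_{k≥i} m_k and define the linear map A_q on (ℝ³)^N by (A_q ω)_i = c_i L_i² ω_i − ∑_{j≠i} c_{max(i,j)} L_i L_j · (q_i × (q_j × ω_j)). Then for every h : {1,…,N} → ℝ³ with q_i·h_i = 0 for all i, there exists a unique ω : {1,…,N} → ℝ³ with q_i·ω_i = 0 for all i and A_q ω = h. (That is, A_q restricts to a linear bijection of the subspace T_{q₁}S² × ⋯ × T_{q_N}S² of (ℝ³)^N onto itself; this invertibility is what allows the N-fold pendulum dynamics to be written explicitly in terms of the infinitesimal generator of the SE(3)^N action.) -/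
noncomputable section

open Finset

namespace Pend

lemma cross_apply (u v : Fin 3 → ℝ) (k : Fin 3) : cross u v k =
    ![u 1 * v 2 - u 2 * v 1, u 2 * v 0 - u 0 * v 2, u 0 * v 1 - u 1 * v 0] k := rfl

lemma cross_add_right (u v w : Fin 3 → ℝ) : cross u (v + w) = cross u v + cross u w := by
  funext k; fin_cases k <;> simp [cross] <;> ring

lemma cross_smul_right (c : ℝ) (u v : Fin 3 → ℝ) : cross u (c • v) = c • cross u v := by
  funext k; fin_cases k <;> simp [cross] <;> ring

lemma cross_zero_right (u : Fin 3 → ℝ) : cross u 0 = 0 := by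
  funext k; fin_cases k <;> simp [cross]

lemma dot_add_right (u v w : Fin 3 → ℝ) : dot u (v + w) = dot u v + dot u w := by
  simp [dot]; ring

lemma dot_smul_right (c : ℝ) (u v : Fin 3 → ℝ) : dot u (c • v) = c * dot u v := by
  simp [dot]; ring

lemma dot_comm (u v : Fin 3 → ℝ) : dot u v = dot v u := by simp [dot]; ring

lemma dot_zero_right (u : Fin 3 → ℝ) : dot u 0 = 0 := by simp [dot]

lemma dot_sum_right {ι : Type*} (s : Finset ι) (u : Fin 3 → ℝ) (f : ι → Fin 3 → ℝ) :
    dot u (∑ i ∈ s, f i) = ∑ i ∈ s, dot u (f i) := by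
  induction s using Finset.cons_induction with
  | empty => simp [dot_zero_right]
  | cons a s ha ih => simp [Finset.sum_cons, dot_add_right, ih]

lemma dot_sum_left {ι : Type*} (s : Finset ι) (f : ι → Fin 3 → ℝ) (u : Fin 3 → ℝ) :
    dot (∑ i ∈ s, f i) u = ∑ i ∈ s, dot (f i) u := by
  rw [dot_comm, dot_sum_right]; exact Finset.sum_congr rfl fun i _ => dot_comm u (f i)

lemma dot_self_nonneg (u : Fin 3 → ℝ) : 0 ≤ dot u u := by
  simp only [dot]; nlinarith [sq_nonneg (u 0), sq_nonneg (u 1), sq_nonneg (u 2)]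

lemma eq_zero_of_dot_self (u : Fin 3 → ℝ) (h : dot u u = 0) : u = 0 := by
  simp only [dot] at h
  have h0 : u 0 = 0 := by nlinarith [sq_nonneg (u 0), sq_nonneg (u 1), sq_nonneg (u 2)]
  have h1 : u 1 = 0 := by nlinarith [sq_nonneg (u 0), sq_nonneg (u 1), sq_nonneg (u 2)]
  have h2 : u 2 = 0 := by nlinarith [sq_nonneg (u 0), sq_nonneg (u 1), sq_nonneg (u 2)]
  funext k; fin_cases k <;> simp [h0, h1, h2]

lemma triple_id (a b c d : Fin 3 → ℝ) :
    dot a (cross b (cross c d)) = - dot (cross a b) (cross d c) := by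
  simp [dot, cross]; ring

lemma lagrange (a b : Fin 3 → ℝ) :
    dot (cross a b) (cross a b) = dot a a * dot b b - dot a b ^ 2 := by
  simp [dot, cross]; ring

lemma recover_zero (q w : Fin 3 → ℝ) (hq : dot q q = 1) (h1 : dot q w = 0)
    (h2 : cross w q = 0) : w = 0 := by
  apply eq_zero_of_dot_self
  have := lagrange w q
  rw [h2, hq, dot_comm w q, h1] at this
  rw [show dot (0 : Fin 3 → ℝ) 0 = 0 by simp [dot]] at this
  linarith

lemma dot_qq_one (u : Fin 3 → ℝ) (h : norm3 u = 1) : dot u u = 1 := by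
  have := Real.sqrt_eq_one.mp h
  exact this


section Main
variable {N : ℕ} (m L : Fin N → ℝ) (q : Fin N → Fin 3 → ℝ)

lemma dot_smul_left (c : ℝ) (u v : Fin 3 → ℝ) : dot (c • u) v = c * dot u v := by
  simp [dot]; ring

lemma dot_sub_right (u v w : Fin 3 → ℝ) : dot u (v - w) = dot u v - dot u w := by
  simp [dot]; ring

lemma dot_cross_self (u v : Fin 3 → ℝ) : dot u (cross u v) = 0 := by
  simp [dot, cross]; ring

/-- The inertia operator as a linear map. -/
def Aop : (Fin N → Fin 3 → ℝ) →ₗ[ℝ] (Fin N → Fin 3 → ℝ) where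
  toFun ω := fun i =>
    ((∑ k ∈ univ.filter (fun k => i ≤ k), m k) * L i ^ 2) • ω i -
      ∑ j ∈ univ.erase i,
        ((∑ k ∈ univ.filter (fun k => max i j ≤ k), m k) * L i * L j) •
          cross (q i) (cross (q j) (ω j))
  map_add' ω σ := by
    funext i
    simp only [Pi.add_apply, cross_add_right, smul_add, Finset.sum_add_distrib]
    abel
  map_smul' c ω := by
    funext i
    simp only [Pi.smul_apply, cross_smul_right, RingHom.id_apply, smul_comm _ c,
      ← Finset.smul_sum, ← smul_sub]

/-- The tangent subspace. -/
def tang : Submodule ℝ (Fin N → Fin 3 → ℝ) where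
  carrier := {ω | ∀ i, dot (q i) (ω i) = 0}
  add_mem' := by
    intro a b ha hb i
    show dot _ (a i + b i) = 0
    rw [dot_add_right, ha i, hb i]; ring
  zero_mem' := fun i => dot_zero_right _
  smul_mem' := by
    intro c a ha i
    show dot _ (c • a i) = 0
    rw [dot_smul_right, ha i]; ring

lemma mem_tang (ω : Fin N → Fin 3 → ℝ) : ω ∈ tang q ↔ ∀ i, dot (q i) (ω i) = 0 := Iff.rfl

lemma Aop_mem_tang (ω : Fin N → Fin 3 → ℝ) (hω : ω ∈ tang q) :
    Aop m L q ω ∈ tang q := by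
  intro i
  show dot _ (_ - _) = 0
  rw [dot_sub_right, dot_smul_right, hω i, dot_sum_right]
  simp [dot_smul_right, dot_cross_self]

lemma Aop_inj (hm : ∀ k, 0 < m k) (hL : ∀ i, L i ≠ 0) (hq : ∀ i, norm3 (q i) = 1)
    (ω : Fin N → Fin 3 → ℝ) (hω : ω ∈ tang q) (h0 : Aop m L q ω = 0) : ω = 0 := by
  have hqq : ∀ i, dot (q i) (q i) = 1 := fun i => dot_qq_one _ (hq i)
  have hωq : ∀ i, dot (ω i) (q i) = 0 := fun i => by rw [dot_comm]; exact hω i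
  set v : Fin N → Fin 3 → ℝ := fun i => L i • cross (ω i) (q i) with hv_def
  set S : Fin N → Fin 3 → ℝ := fun k => ∑ i ∈ univ.filter (fun i => i ≤ k), v i with hS_def
  set cmax : Fin N → Fin N → ℝ := fun i j => ∑ k ∈ univ.filter (fun k => max i j ≤ k), m k
    with hcmax_def
  set d : Fin N → Fin N → ℝ := fun i j => dot (v i) (v j) with hd_def
  -- pointwise identities
  have hdij : ∀ i j, d i j = L i * L j * dot (cross (ω i) (q i)) (cross (ω j) (q j)) := by
    intro i j
    rw [hd_def]; simp only []
    rw [hv_def]; simp only []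
    rw [dot_smul_left, dot_smul_right]; ring
  have hdiag : ∀ i, d i i = L i ^ 2 * dot (ω i) (ω i) := by
    intro i
    rw [hdij i i, lagrange, hqq i, hωq i]; ring
  -- the per-index expansion of the quadratic form
  have key1 : ∀ i, dot (ω i) (Aop m L q ω i) = ∑ j, cmax i j * d i j := by
    intro i
    have hcii : cmax i i = ∑ k ∈ univ.filter (fun k => i ≤ k), m k := by
      rw [hcmax_def]; simp
    have expand : dot (ω i) (Aop m L q ω i) =
        (cmax i i * L i ^ 2) * dot (ω i) (ω i) -
          ∑ j ∈ univ.erase i, (cmax i j * L i * L j) *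
            dot (ω i) (cross (q i) (cross (q j) (ω j))) := by
      show dot (ω i) (_ - _) = _
      rw [dot_sub_right, dot_smul_right, dot_sum_right, hcii]
      congr 1
      exact Finset.sum_congr rfl fun j _ => dot_smul_right _ _ _
    rw [expand]
    rw [← Finset.add_sum_erase _ (fun j => cmax i j * d i j) (mem_univ i)]
    have hterm : ∀ j ∈ univ.erase i, cmax i j * d i j =
        -(cmax i j * L i * L j * dot (ω i) (cross (q i) (cross (q j) (ω j)))) := by
      intro j _
      rw [hdij i j, triple_id]
      ring
    rw [Finset.sum_congr rfl hterm, Finset.sum_neg_distrib, hdiag i]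
    ring
  -- rewrite cmax as a sum over k and swap sums
  have key2 : (∑ i, ∑ j, cmax i j * d i j) = ∑ k, m k * dot (S k) (S k) := by
    have e1 : ∀ i j, cmax i j * d i j
        = ∑ k, if max i j ≤ k then m k * d i j else 0 := by
      intro i j
      rw [← Finset.sum_filter, hcmax_def, ← Finset.sum_mul]
    calc (∑ i, ∑ j, cmax i j * d i j)
        = ∑ i, ∑ j, ∑ k, if max i j ≤ k then m k * d i j else 0 :=
          Finset.sum_congr rfl fun i _ => Finset.sum_congr rfl fun j _ => e1 i j
      _ = ∑ i, ∑ k, ∑ j, if max i j ≤ k then m k * d i j else 0 :=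
          Finset.sum_congr rfl fun i _ => Finset.sum_comm
      _ = ∑ k, ∑ i, ∑ j, if max i j ≤ k then m k * d i j else 0 :=
          Finset.sum_comm
      _ = ∑ k, m k * dot (S k) (S k) := by
          refine Finset.sum_congr rfl fun k _ => ?_
          have e2 : ∀ i, (∑ j, if max i j ≤ k then m k * d i j else 0)
              = if i ≤ k then ∑ j, (if j ≤ k then m k * d i j else 0) else 0 := by
            intro i
            by_cases hik : i ≤ k
            · simp [max_le_iff, hik]
            · simp [max_le_iff, hik]
          rw [Finset.sum_congr rfl fun i _ => e2 i]
          rw [← Finset.sum_filter]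
          have : dot (S k) (S k) = ∑ i ∈ univ.filter (fun i => i ≤ k),
              ∑ j ∈ univ.filter (fun j => j ≤ k), d i j := by
            rw [hS_def]; simp only []
            rw [dot_sum_left]
            exact Finset.sum_congr rfl fun i _ => dot_sum_right _ _ _
          rw [this, Finset.mul_sum]
          refine Finset.sum_congr rfl fun i _ => ?_
          rw [← Finset.sum_filter, Finset.mul_sum]
  -- total energy is zero
  have hzero : (∑ k, m k * dot (S k) (S k)) = 0 := by
    rw [← key2, ← Finset.sum_congr rfl fun i _ => key1 i]
    rw [h0]
    simp [dot_zero_right]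
  -- each S k vanishes
  have hS0 : ∀ k, S k = 0 := by
    have := (Finset.sum_eq_zero_iff_of_nonneg
      (fun k _ => mul_nonneg (hm k).le (dot_self_nonneg (S k)))).mp hzero
    intro k
    have hk := this k (mem_univ k)
    have : dot (S k) (S k) = 0 := by
      rcases mul_eq_zero.mp hk with h | h
      · exact absurd h (hm k).ne'
      · exact h
    exact eq_zero_of_dot_self _ this
  -- each v i vanishes, by strong induction
  have hv0 : ∀ i, v i = 0 := by
    have H : ∀ n : ℕ, ∀ hn : n < N, v ⟨n, hn⟩ = 0 := by
      intro n
      induction n using Nat.strongRecOn with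
      | ind n ihn =>
        intro hn
        set i : Fin N := ⟨n, hn⟩ with hi_def
        have ih : ∀ j : Fin N, j < i → v j = 0 := by
          intro j hj
          have := ihn j.val (by simpa [hi_def, Fin.lt_def] using hj) j.isLt
          simpa [Fin.eta] using this
        have hsplit : univ.filter (fun j => j ≤ i)
            = insert i (univ.filter (fun j => j < i)) := by
          ext j
          simp [le_iff_lt_or_eq, or_comm]
        have hSi : S i = v i + ∑ j ∈ univ.filter (fun j => j < i), v j := by
          rw [hS_def]; simp only []
          rw [hsplit, Finset.sum_insert (by simp)]
        have hrest : (∑ j ∈ univ.filter (fun j => j < i), v j) = 0 :=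
          Finset.sum_eq_zero fun j hj => ih j (by simpa using hj)
        have hS := hS0 i
        rw [hSi, hrest, add_zero] at hS
        exact hS
    intro i
    have := H i.val i.isLt
    simpa [Fin.eta] using this
  have hω0 : ∀ i, ω i = 0 := by
    intro i
    have hc : cross (ω i) (q i) = 0 := by
      have := hv0 i
      rw [hv_def] at this
      simp only [] at this
      rcases smul_eq_zero.mp this with h | h
      · exact absurd h (hL i)
      · exact h
    exact recover_zero (q i) (ω i) (hqq i) (hω i) hc
  funext i
  exact hω0 i

end Main
end Pend

/-- The operator `A_q(ω) = R(q)ω` of the `N`-fold 3D pendulum restricts to a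
linear bijection of `T_{q₁}S² × ⋯ × T_{q_N}S²` onto itself: for every `h`
with `q_i·h_i = 0` for all `i`, there is a unique `ω` with `q_i·ω_i = 0` for
all `i` such that `A_q ω = h`. Here `c_i = ∑_{k ≥ i} m_k` and
`(A_q ω)_i = c_i L_i² ω_i − ∑_{j ≠ i} c_{max(i,j)} L_i L_j (q_i × (q_j × ω_j))`. -/
theorem pendulum_inertia_bijective (N : ℕ) (hN : 1 ≤ N) (m L : Fin N → ℝ)
    (hm : ∀ k, 0 < m k) (hL : ∀ i, L i ≠ 0)
    (q : Fin N → (Fin 3 → ℝ)) (hq : ∀ i, norm3 (q i) = 1)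
    (h : Fin N → (Fin 3 → ℝ)) (hh : ∀ i, dot (q i) (h i) = 0) :
    ∃! ω : Fin N → (Fin 3 → ℝ),
      (∀ i, dot (q i) (ω i) = 0) ∧
      (fun i : Fin N =>
          ((∑ k ∈ univ.filter (fun k => i ≤ k), m k) * L i ^ 2) • ω i -
            ∑ j ∈ univ.erase i,
              ((∑ k ∈ univ.filter (fun k => max i j ≤ k), m k) * L i * L j) •
                cross (q i) (cross (q j) (ω j))) = h := by

  classical
  set V := Pend.tang q with hV
  set A := Pend.Aop m L q with hA
  have hmap : ∀ x ∈ V, A x ∈ V := fun x hx => Pend.Aop_mem_tang m L q x hx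
  set f : V →ₗ[ℝ] V := A.restrict hmap with hf_def
  have hinj : Function.Injective f := by
    intro x y hxy
    apply Subtype.ext
    have hAxy : A x.1 = A y.1 := congrArg Subtype.val hxy
    have hsub : A (x.1 - y.1) = 0 := by rw [map_sub, hAxy, sub_self]
    have hz := Pend.Aop_inj m L q hm hL hq (x.1 - y.1) (sub_mem x.2 y.2) hsub
    exact sub_eq_zero.mp hz
  have hsurj : Function.Surjective f := LinearMap.injective_iff_surjective.mp hinj
  obtain ⟨w, hw⟩ := hsurj ⟨h, hh⟩
  have hwA : A w.1 = h := congrArg Subtype.val hw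
  refine ⟨w.1, ⟨w.2, hwA⟩, ?_⟩
  rintro ω' ⟨h1, h2⟩
  have hω'A : A ω' = h := h2
  have hz : A (ω' - w.1) = 0 := by rw [map_sub, hω'A, hwA, sub_self]
  have hz2 := Pend.Aop_inj m L q hm hL hq (ω' - w.1) (sub_mem h1 w.2) hz
  exact sub_eq_zero.mp hz2
end
end
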